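/- Let k ≥ 3 and n ≥ 4k be integers and let i ∈ {1, 2}. Then the spectral radius of K_i((n−k+i)/2, 0, 0) is the largest root of x³ − x² + (1−n)x + k − (i+1) = 0, and it is strictly less than (1/2)·√(4n − 2k − 4 + 2·√(5k² − 8kn + 4n² − 4k + 4)). -/

import Mathlib

open SimpleGraph

/-- The `l`-edge-connectivity of a graph: the minimum number of edges whose removal
leaves a graph with at least `l` connected components, if the graph has at least `l`
vertices; otherwise the number of vertices. -/
noncomputable def edgeConnL {V : Type*} (l : ℕ) (G : SimpleGraph V) : ℕ :=
  if l ≤ Nat.card V then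
    sInf {c : ℕ | ∃ F : Set (Sym2 V), F ⊆ G.edgeSet ∧ F.ncard = c ∧
      l ≤ Nat.card (G.deleteEdges F).ConnectedComponent}
  else Nat.card V

/-- A graph is minimally `(k,l)`-edge-connected if it is connected, its
`l`-edge-connectivity is at least `k`, and deleting any edge drops the
`l`-edge-connectivity below `k`. -/
def IsMinimallyKLEdgeConnected {V : Type*} (k l : ℕ) (G : SimpleGraph V) : Prop :=
  G.Connected ∧ k ≤ edgeConnL l G ∧
    ∀ e ∈ G.edgeSet, edgeConnL l (G.deleteEdges {e}) < k

/-- The real adjacency matrix of a simple graph. -/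
noncomputable def adjMat {V : Type*} (G : SimpleGraph V) : Matrix V V ℝ :=
  letI := Classical.decRel G.Adj
  G.adjMatrix ℝ

/-- The spectral radius of a graph: the largest (real) eigenvalue of its adjacency matrix. -/
noncomputable def specRad {V : Type*} [Fintype V] [DecidableEq V]
    (G : SimpleGraph V) : ℝ :=
  sSup (spectrum ℝ (adjMat G))

abbrev FriendPendV (t p : ℕ) : Type := Unit ⊕ ((Fin t × Fin 2) ⊕ Fin p)

/-- `F^{p}_{t}`: the graph obtained from the disjoint union of the star `K_{1,p}` and the
friendship graph consisting of `t` triangles sharing one common apex, by identifying the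
centre of the star with the apex.  Here `Sum.inl _` is the apex, `(i, _) : Fin t × Fin 2`
are the two outer vertices of the `i`-th triangle, and `Fin p` are the pendant vertices. -/
def FriendPend (t p : ℕ) : SimpleGraph (FriendPendV t p) :=
  SimpleGraph.fromRel (fun a b =>
    match a, b with
    | Sum.inl _, Sum.inr _ => True
    | Sum.inr (Sum.inl (i, _)), Sum.inr (Sum.inl (j, _)) => i = j
    | _, _ => False)

/-!
An eigenvector of `FriendPend t p` for an eigenvalue `μ > 1` is constant on each of the three
cells (apex, triangle vertices, pendant vertices), with values `a`, `a / (μ - 1)`, `a / μ`;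
the apex equation then says that `μ` is a root of `x³ - x² - (2t + p) x + p`, the
characteristic polynomial of the quotient matrix. Conversely every root `μ > 1` of this cubic
is an eigenvalue, with eigenvector `(μ² - μ, μ, μ - 1)` on the cells. The cubic is negative at
`1`, so its largest root exceeds `1` and is the spectral radius `ρ`. For the bound, the cubic
gives `ρ² - ρ ≤ n - 1`, while the right-hand side `B` satisfies `B ≥ 1/2` and `B² - B > n - 1`.
-/

open Matrix Module End Polynomial

lemma Matrix.mem_spectrum_iff_exists_mulVec_eq_smul {n K : Type*} [Fintype n] [DecidableEq n]
    [Field K] (A : Matrix n n K) (μ : K) :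
    μ ∈ spectrum K A ↔ ∃ v ≠ 0, A *ᵥ v = μ • v := by
  rw [← spectrum_toLin', ← hasEigenvalue_iff_mem_spectrum]
  constructor
  · intro h
    obtain ⟨v, hv⟩ := h.exists_hasEigenvector
    exact ⟨v, hv.2, by simpa using hv.apply_eq_smul⟩
  · rintro ⟨v, hv0, hv⟩
    exact hasEigenvalue_of_hasEigenvector ⟨mem_eigenspace_iff.mpr (by simpa using hv), hv0⟩

open Classical in
lemma adjMat_mulVec_apply {V : Type*} [Fintype V] (G : SimpleGraph V) (v : V → ℝ) (u : V) :
    (adjMat G *ᵥ v) u = ∑ w, if G.Adj u w then v w else 0 := by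
  simp [adjMat, mulVec, dotProduct, adjMatrix_apply]

lemma IsGreatest.of_forall_lt_mem_iff {α : Type*} [LinearOrder α] {s u : Set α} {a r : α}
    (hs : IsGreatest s r) (har : a < r) (h : ∀ x, a < x → (x ∈ s ↔ x ∈ u)) :
    IsGreatest u r := by
  refine ⟨(h r har).1 hs.1, fun x hx => ?_⟩
  rcases le_or_gt x a with hxa | hax
  · exact (hxa.trans_lt har).le
  · exact hs.2 ((h x hax).2 hx)

lemma Polynomial.exists_isGreatest_setOf_eval_eq_zero {f : ℝ[X]} (hf : f ≠ 0) {a b : ℝ}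
    (hab : a ≤ b) (ha : f.eval a < 0) (hb : 0 < f.eval b) :
    ∃ r, a < r ∧ IsGreatest {x | f.eval x = 0} r := by
  have hfin : {x | f.eval x = 0}.Finite := finite_setOfPred_isRoot hf
  obtain ⟨x, hx, hfx⟩ := intermediate_value_Ioo hab f.continuous.continuousOn ⟨ha, hb⟩
  exact ⟨_, hx.1.trans_le (le_csSup hfin.bddAbove hfx), Set.Nonempty.csSup_mem ⟨x, hfx⟩ hfin,
    fun y hy => le_csSup hfin.bddAbove hy⟩

lemma lt_sqrt_bound_of_sq_sub_self_le {k N r : ℝ} (hk : 2 ≤ k) (hkN : 4 * k ≤ N)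
    (hr : r ^ 2 - r ≤ N - 1) :
    r < Real.sqrt (4 * N - 2 * k - 4 +
      2 * Real.sqrt (5 * k ^ 2 - 8 * k * N + 4 * N ^ 2 - 4 * k + 4)) / 2 := by
  set D := 5 * k ^ 2 - 8 * k * N + 4 * N ^ 2 - 4 * k + 4
  have hD_lower : 2 * N - 2 * k ≤ Real.sqrt D :=
    Real.le_sqrt_of_sq_le (by nlinarith [sq_nonneg (k - 2)])
  have hD_upper : Real.sqrt D ≤ 2 * N :=
    Real.sqrt_le_iff.2 ⟨by linarith, by nlinarith⟩
  set B := Real.sqrt (4 * N - 2 * k - 4 + 2 * Real.sqrt D) / 2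
  have hB : B ^ 2 = (4 * N - 2 * k - 4 + 2 * Real.sqrt D) / 4 := by
    rw [div_pow, Real.sq_sqrt (by linarith)]
    norm_num
  have hB_nonneg : 0 ≤ B := by positivity
  have hB_lt : B < 5 * N / 8 := by nlinarith
  -- `x ↦ x ^ 2 - x` is increasing on `[1/2, ∞)` and `N - 1 < B ^ 2 - B`
  by_contra! hBr
  nlinarith [mul_nonneg (sub_nonneg.2 hBr) (show 0 ≤ r + B - 1 by nlinarith)]

namespace FriendPend

variable {t p : ℕ}

lemma adjMat_mulVec_apex (v : FriendPendV t p → ℝ) :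
    (adjMat (FriendPend t p) *ᵥ v) (Sum.inl ()) =
      ∑ x : Fin t × Fin 2, v (Sum.inr (Sum.inl x)) + ∑ j : Fin p, v (Sum.inr (Sum.inr j)) := by
  simp [adjMat_mulVec_apply, Fintype.sum_sum_type, FriendPend]

lemma adjMat_mulVec_triangle (v : FriendPendV t p → ℝ) (i : Fin t) (s : Fin 2) :
    (adjMat (FriendPend t p) *ᵥ v) (Sum.inr (Sum.inl (i, s))) =
      v (Sum.inl ()) + v (Sum.inr (Sum.inl (i, s.rev))) := by
  fin_cases s <;>
    simp [adjMat_mulVec_apply, Fintype.sum_sum_type, Fintype.sum_prod_type, FriendPend,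
      eq_comm (a := i)]

lemma adjMat_mulVec_pendant (v : FriendPendV t p → ℝ) (j : Fin p) :
    (adjMat (FriendPend t p) *ᵥ v) (Sum.inr (Sum.inr j)) = v (Sum.inl ()) := by
  simp [adjMat_mulVec_apply, Fintype.sum_sum_type, FriendPend]

def cellVec (a b c : ℝ) : FriendPendV t p → ℝ :=
  Sum.elim (fun _ => a) (Sum.elim (fun _ => b) (fun _ => c))

lemma adjMat_mulVec_cellVec (a b c : ℝ) :
    adjMat (FriendPend t p) *ᵥ cellVec a b c = cellVec (2 * t * b + p * c) (a + b) a := by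
  funext u
  rcases u with ⟨⟨⟩⟩ | ⟨i, s⟩ | j
  · simp only [adjMat_mulVec_apex, cellVec, Sum.elim_inl, Sum.elim_inr, Finset.sum_const,
      Finset.card_univ, Fintype.card_prod, Fintype.card_fin, nsmul_eq_mul]
    push_cast
    ring
  · simp [adjMat_mulVec_triangle, cellVec]
  · simp [adjMat_mulVec_pendant, cellVec]

lemma smul_cellVec (μ a b c : ℝ) :
    μ • cellVec (t := t) (p := p) a b c = cellVec (μ * a) (μ * b) (μ * c) := by
  funext u
  rcases u with _ | _ | _ <;> rfl

lemma eq_cellVec_of_mulVec_eq_smul {μ : ℝ} (hμ : 1 < μ) {v : FriendPendV t p → ℝ}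
    (hv : adjMat (FriendPend t p) *ᵥ v = μ • v) :
    v = cellVec (v (Sum.inl ())) (v (Sum.inl ()) / (μ - 1)) (v (Sum.inl ()) / μ) := by
  funext u
  rcases u with ⟨⟨⟩⟩ | ⟨i, s⟩ | j
  · rfl
  · have e := congrFun hv (Sum.inr (Sum.inl (i, s)))
    have e' := congrFun hv (Sum.inr (Sum.inl (i, s.rev)))
    simp only [adjMat_mulVec_triangle, Fin.rev_rev, Pi.smul_apply, smul_eq_mul] at e e'
    have h : (μ + 1) * ((μ - 1) * v (Sum.inr (Sum.inl (i, s))) - v (Sum.inl ())) = 0 := by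
      linear_combination μ * e.symm + e'.symm
    rw [cellVec, Sum.elim_inr, Sum.elim_inl, eq_div_iff (by linarith)]
    linarith [(mul_eq_zero.1 h).resolve_left (by linarith)]
  · have e := congrFun hv (Sum.inr (Sum.inr j))
    simp only [adjMat_mulVec_pendant, Pi.smul_apply, smul_eq_mul] at e
    rw [cellVec, Sum.elim_inr, Sum.elim_inr, eq_div_iff (by linarith)]
    linarith

noncomputable def cubic (t p : ℕ) : ℝ[X] :=
  X ^ 3 - X ^ 2 - C (2 * t + p : ℝ) * X + C (p : ℝ)

@[simp]
lemma eval_cubic (x : ℝ) : (cubic t p).eval x = x ^ 3 - x ^ 2 - (2 * t + p) * x + p := by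
  simp [cubic]

lemma cubic_ne_zero : cubic t p ≠ 0 := by
  intro h
  simpa [cubic, coeff_X, coeff_C] using congrArg (coeff · 3) h

lemma exists_isGreatest_roots_cubic (ht : 0 < t) :
    ∃ r, 1 < r ∧ IsGreatest {x | (cubic t p).eval x = 0} r := by
  have hm : (1 : ℝ) ≤ 2 * t + p + 1 := by linarith [(Nat.cast_nonneg p : (0 : ℝ) ≤ p)]
  refine exists_isGreatest_setOf_eval_eq_zero cubic_ne_zero hm ?_ ?_
  · have : (0 : ℝ) < t := by exact_mod_cast ht
    rw [eval_cubic]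
    linarith
  · have hs : (0 : ℝ) < 2 * t + p := by positivity
    rw [eval_cubic, show ∀ s : ℝ, (s + 1) ^ 3 - (s + 1) ^ 2 - s * (s + 1) = (s + 1) * s ^ 2 by
      intro s; ring]
    positivity

lemma mem_spectrum_iff_eval_cubic {μ : ℝ} (hμ : 1 < μ) :
    μ ∈ spectrum ℝ (adjMat (FriendPend t p)) ↔ (cubic t p).eval μ = 0 := by
  rw [mem_spectrum_iff_exists_mulVec_eq_smul, eval_cubic]
  constructor
  · rintro ⟨v, hv0, hv⟩
    have hv_eq := eq_cellVec_of_mulVec_eq_smul hμ hv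
    set a := v (Sum.inl ())
    have ha : a ≠ 0 := by
      rintro ha
      refine hv0 (hv_eq.trans ?_)
      funext u
      rcases u with _ | _ | _ <;> simp [cellVec, ha]
    rw [hv_eq, adjMat_mulVec_cellVec, smul_cellVec] at hv
    have h := congrFun hv (Sum.inl ())
    simp only [cellVec, Sum.elim_inl] at h
    have hμ₀ : μ ≠ 0 := by positivity
    have hμ₁ : μ - 1 ≠ 0 := by linarith
    field_simp at h
    linear_combination -h
  · intro h
    refine ⟨cellVec (μ ^ 2 - μ) μ (μ - 1), fun h0 => ?_, ?_⟩
    · have := congrFun h0 (Sum.inl ())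
      simp only [cellVec, Sum.elim_inl, Pi.zero_apply] at this
      nlinarith
    · rw [adjMat_mulVec_cellVec, smul_cellVec]
      congr 1
      · linear_combination -h
      all_goals ring

lemma specRad_eq_of_isGreatest_roots_cubic {r : ℝ} (hr₁ : 1 < r)
    (hr : IsGreatest {x | (cubic t p).eval x = 0} r) : specRad (FriendPend t p) = r :=
  (hr.of_forall_lt_mem_iff hr₁ fun _ hx => (mem_spectrum_iff_eval_cubic hx).symm).csSup_eq

lemma sq_sub_self_le_of_eval_cubic {r : ℝ} (hr : 0 < r) (h : (cubic t p).eval r = 0) :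
    r ^ 2 - r ≤ 2 * t + p := by
  rw [eval_cubic] at h
  nlinarith [(Nat.cast_nonneg p : (0 : ℝ) ≤ p)]

end FriendPend

/-- Let `k ≥ 3` and `n ≥ 4k` and `i ∈ {1, 2}`, and let `t = (n − k + i)/2`.  Then the
spectral radius of `K_i((n−k+i)/2, 0, 0)` — the graph consisting of `(n−k+i)/2` triangles
and `k − (i+1)` pendant edges all sharing one common vertex — is the largest root of
`x³ − x² + (1 − n)x + k − (i+1) = 0`, and it is strictly less than
`√(4n − 2k − 4 + 2√(5k² − 8kn + 4n² − 4k + 4)) / 2`. -/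
theorem spectral_radius_Ki_order (k n i t : ℕ) (hk : 3 ≤ k) (hn : 4 * k ≤ n)
    (hi : i = 1 ∨ i = 2) (ht : 2 * t = n - k + i) :
    IsGreatest {x : ℝ | x ^ 3 - x ^ 2 + (1 - (n : ℝ)) * x + (k : ℝ) - ((i : ℝ) + 1) = 0}
      (specRad (FriendPend t (k - (i + 1)))) ∧
    specRad (FriendPend t (k - (i + 1))) <
      Real.sqrt (4 * (n : ℝ) - 2 * (k : ℝ) - 4 +
        2 * Real.sqrt (5 * (k : ℝ) ^ 2 - 8 * (k : ℝ) * (n : ℝ) + 4 * (n : ℝ) ^ 2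
          - 4 * (k : ℝ) + 4)) / 2 := by
  have ht₀ : 0 < t := by omega
  obtain ⟨p, rfl⟩ : ∃ p, k = p + (i + 1) := ⟨k - (i + 1), by omega⟩
  obtain rfl : n = 2 * t + p + 1 := by omega
  obtain ⟨r, hr₁, hr⟩ := FriendPend.exists_isGreatest_roots_cubic (p := p) ht₀
  have hroots : {x : ℝ | x ^ 3 - x ^ 2 + (1 - ((2 * t + p + 1 : ℕ) : ℝ)) * x
      + ((p + (i + 1) : ℕ) : ℝ) - ((i : ℝ) + 1) = 0} = {x | (FriendPend.cubic t p).eval x = 0} := by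
    ext x
    simp only [Set.mem_ofPred_eq, FriendPend.eval_cubic]
    push_cast
    constructor <;> intro h <;> linear_combination h
  rw [Nat.add_sub_cancel, hroots, FriendPend.specRad_eq_of_isGreatest_roots_cubic hr₁ hr]
  refine ⟨hr, lt_sqrt_bound_of_sq_sub_self_le (by norm_cast; omega) (by exact_mod_cast hn) ?_⟩
  have := FriendPend.sq_sub_self_le_of_eval_cubic (by linarith) hr.1
  push_cast
  linarith
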